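/- arXiv:0903.4743 — 2 statements merged into one kernel-verified Lean document; each statement's English description precedes it below -/
import Mathlib

section
/- For any matrix M in SL(2,C) with M ≠ ±I, the image of the linear endomorphism of sl(2,C) given by m ↦ m - M m M⁻¹ is exactly the set {w ∈ sl(2,C) : tr(w M) = 0}. -/
/-!
Since `m - M m M⁻¹ = ⁅M⁻¹, M m⁆`, and shifting `m` by a scalar does not change this, the image is
the range of `ad M⁻¹` on all of `gl₂`. For any square matrix `A`, `ad A` is skew for the trace form
`(X, Y) ↦ tr (X Y)`, which is nondegenerate, so `range (ad A)` is the orthogonal of the centralizer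
`ker (ad A)`. The centralizers of `M⁻¹` and `M` agree, and since `M ≠ ±1` is not scalar, its
centralizer is spanned by `1` and `M`.
-/

open Matrix

namespace Matrix

section TraceForm

variable {K n : Type*} [Field K] [Fintype n] [DecidableEq n]

def traceForm : LinearMap.BilinForm K (Matrix n n K) :=
  (LinearMap.mul K (Matrix n n K)).compr₂ (traceLinearMap n K K)

@[simp]
lemma traceForm_apply (A B : Matrix n n K) : traceForm A B = trace (A * B) := rfl

lemma traceForm_isRefl : (traceForm : LinearMap.BilinForm K (Matrix n n K)).IsRefl :=
  fun A B h => by rwa [traceForm_apply, trace_mul_comm] at h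

lemma traceForm_nondegenerate :
    (traceForm : LinearMap.BilinForm K (Matrix n n K)).Nondegenerate :=
  LinearMap.BilinForm.Nondegenerate.ofSeparatingLeft fun A hA =>
    ext_iff_trace_mul_right.mpr fun B => by simpa using hA B

lemma mem_traceForm_orthogonal_span_pair {A B W : Matrix n n K} :
    W ∈ traceForm.orthogonal (Submodule.span K {A, B}) ↔
      trace (A * W) = 0 ∧ trace (B * W) = 0 := by
  change Submodule.span K {A, B} ≤ LinearMap.ker (traceForm.flip W) ↔ _
  simp [Submodule.span_le, Set.insert_subset_iff]

end TraceForm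

section Ad

attribute [local instance] LieRing.ofAssociativeRing

variable {K n : Type*} [Field K] [Fintype n] [DecidableEq n]

lemma ad_apply (A m : Matrix n n K) : LieAlgebra.ad K (Matrix n n K) A m = A * m - m * A := by
  rw [LieAlgebra.ad_apply, Ring.lie_def]

lemma mem_ker_ad_iff_commute {A m : Matrix n n K} :
    m ∈ LinearMap.ker (LieAlgebra.ad K (Matrix n n K) A) ↔ Commute A m := by
  rw [LinearMap.mem_ker, ad_apply, sub_eq_zero, commute_iff_eq]

lemma traceForm_orthogonal_range_ad (A : Matrix n n K) :
    traceForm.orthogonal (LinearMap.range (LieAlgebra.ad K (Matrix n n K) A)) =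
      LinearMap.ker (LieAlgebra.ad K (Matrix n n K) A) := by
  ext W
  have h_skew (m : Matrix n n K) :
      trace ((A * m - m * A) * W) = -trace (m * (A * W - W * A)) := by
    simp only [sub_mul, mul_sub, trace_sub, Matrix.mul_assoc, neg_sub]
    rw [trace_mul_comm A]
    simp only [Matrix.mul_assoc]
  simp only [LinearMap.BilinForm.mem_orthogonal_iff, LinearMap.mem_range, forall_exists_index,
    forall_apply_eq_imp_iff, traceForm_apply, ad_apply, LinearMap.mem_ker, h_skew,
    neg_eq_zero, ext_iff_trace_mul_left (B := 0), Matrix.mul_zero, trace_zero]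

lemma range_ad_eq_traceForm_orthogonal_ker (A : Matrix n n K) :
    LinearMap.range (LieAlgebra.ad K (Matrix n n K) A) =
      traceForm.orthogonal (LinearMap.ker (LieAlgebra.ad K (Matrix n n K) A)) := by
  rw [← traceForm_orthogonal_range_ad,
    LinearMap.BilinForm.orthogonal_orthogonal traceForm_nondegenerate traceForm_isRefl]

lemma ker_ad_nonsing_inv {A : Matrix n n K} (hA : IsUnit A.det) :
    LinearMap.ker (LieAlgebra.ad K (Matrix n n K) A⁻¹) =
      LinearMap.ker (LieAlgebra.ad K (Matrix n n K) A) := by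
  ext m
  simp only [mem_ker_ad_iff_commute]
  exact Commute.units_inv_left_iff (u := nonsingInvUnit A hA)

lemma exists_trace_eq_zero_and_eq_sub_conj_iff_mem_range_ad {A : Matrix n n K}
    (hA : IsUnit A.det) (hn : (Fintype.card n : K) ≠ 0) (w : Matrix n n K) :
    (∃ m, trace m = 0 ∧ w = m - A * m * A⁻¹) ↔
      w ∈ LinearMap.range (LieAlgebra.ad K (Matrix n n K) A⁻¹) := by
  simp only [LinearMap.mem_range, ad_apply]
  constructor
  · rintro ⟨m, -, rfl⟩
    exact ⟨A * m, by rw [nonsing_inv_mul_cancel_left _ _ hA, Matrix.mul_assoc]⟩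
  · rintro ⟨X, rfl⟩
    set c := trace (A⁻¹ * X) / Fintype.card n
    refine ⟨A⁻¹ * X - c • 1, ?_, ?_⟩
    · rw [trace_sub, trace_smul, trace_one, smul_eq_mul, div_mul_cancel₀ _ hn, sub_self]
    · rw [Matrix.mul_sub, Matrix.sub_mul, mul_nonsing_inv_cancel_left _ _ hA, Matrix.mul_smul,
        Matrix.smul_mul, Matrix.mul_one, mul_nonsing_inv _ hA]
      abel

end Ad

section FinTwo

lemma smul_one_add_smul_eq_of_apply {R : Type*} [Semiring R] {a b : R}
    {A m : Matrix (Fin 2) (Fin 2) R} (h00 : a + b * A 0 0 = m 0 0) (h01 : b * A 0 1 = m 0 1)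
    (h10 : b * A 1 0 = m 1 0) (h11 : a + b * A 1 1 = m 1 1) : a • 1 + b • A = m := by
  ext i j; fin_cases i <;> fin_cases j <;> simp [h00, h01, h10, h11]

attribute [local instance] LieRing.ofAssociativeRing

variable {K : Type*} [Field K]

lemma mem_span_one_self_of_commute {A m : Matrix (Fin 2) (Fin 2) K}
    (hA : A ∉ Set.range (scalar (Fin 2))) (hm : Commute A m) : m ∈ Submodule.span K {1, A} := by
  rw [Submodule.mem_span_pair]
  have entry (i j : Fin 2) := congrFun (congrFun hm.eq i) j
  have h00 := entry 0 0
  have h01 := entry 0 1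
  have h10 := entry 1 0
  simp only [mul_apply, Fin.sum_univ_two] at h00 h01 h10
  by_cases hb : A 0 1 = 0
  · by_cases hc : A 1 0 = 0
    · have had : A 0 0 - A 1 1 ≠ 0 := fun h => hA ⟨A 0 0, by
        ext i j; fin_cases i <;> fin_cases j <;> simp [hb, hc, sub_eq_zero.mp h]⟩
      have hm01 : m 0 1 = 0 :=
        mul_left_cancel₀ had (by linear_combination h01 + (m 0 0 - m 1 1) * hb)
      have hm10 : m 1 0 = 0 :=
        mul_left_cancel₀ had (by linear_combination -h10 + (m 0 0 - m 1 1) * hc)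
      refine ⟨_, (m 0 0 - m 1 1) / (A 0 0 - A 1 1), smul_one_add_smul_eq_of_apply
        (sub_add_cancel _ _) (by rw [hb, hm01, mul_zero]) (by rw [hc, hm10, mul_zero]) ?_⟩
      field_simp
      ring
    · refine ⟨_, m 1 0 / A 1 0, smul_one_add_smul_eq_of_apply (sub_add_cancel _ _) ?_
        (div_mul_cancel₀ _ hc) ?_⟩
      · field_simp
        linear_combination h00
      · field_simp
        linear_combination h10
  · refine ⟨_, m 0 1 / A 0 1, smul_one_add_smul_eq_of_apply (sub_add_cancel _ _)
      (div_mul_cancel₀ _ hb) ?_ ?_⟩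
    · field_simp
      linear_combination -h00
    · field_simp
      linear_combination -h01

lemma ker_ad_eq_span_one_self {A : Matrix (Fin 2) (Fin 2) K}
    (hA : A ∉ Set.range (scalar (Fin 2))) :
    LinearMap.ker (LieAlgebra.ad K (Matrix (Fin 2) (Fin 2) K) A) = Submodule.span K {1, A} := by
  refine le_antisymm (fun m hm => mem_span_one_self_of_commute hA (mem_ker_ad_iff_commute.mp hm)) ?_
  rw [Submodule.span_le, Set.insert_subset_iff, Set.singleton_subset_iff]
  exact ⟨mem_ker_ad_iff_commute.mpr (Commute.one_right A),
    mem_ker_ad_iff_commute.mpr (Commute.refl A)⟩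

lemma SpecialLinearGroup.coe_notMem_range_scalar {M : SpecialLinearGroup (Fin 2) K}
    (hM1 : M ≠ 1) (hM2 : M ≠ -1) :
    (M : Matrix (Fin 2) (Fin 2) K) ∉ Set.range (scalar (Fin 2)) := by
  rintro ⟨c, hc⟩
  obtain rfl | rfl : c = 1 ∨ c = -1 := by simpa [← hc, det_fin_two] using M.2
  · exact hM1 (Subtype.ext (hc.symm.trans (map_one _)))
  · exact hM2 (Subtype.ext (hc.symm.trans (by rw [map_neg, map_one]; rfl)))

end FinTwo

end Matrix

/-- For `M ∈ SL(2,ℂ)` with `M ≠ ±I`, the image of the endomorphism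
`m ↦ m - M m M⁻¹` of `sl(2,ℂ)` (traceless matrices) is `{w ∈ sl(2,ℂ) : tr (w M) = 0}`. -/
theorem image_ad_endomorphism_eq_trace_zero
    (M : Matrix.SpecialLinearGroup (Fin 2) ℂ) (hM1 : M ≠ 1) (hM2 : M ≠ -1) :
    {w : Matrix (Fin 2) (Fin 2) ℂ | ∃ m : Matrix (Fin 2) (Fin 2) ℂ,
        Matrix.trace m = 0 ∧ w = m - (M : Matrix (Fin 2) (Fin 2) ℂ) * m * (M : Matrix (Fin 2) (Fin 2) ℂ)⁻¹}
      = {w : Matrix (Fin 2) (Fin 2) ℂ | Matrix.trace w = 0 ∧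
          Matrix.trace (w * (M : Matrix (Fin 2) (Fin 2) ℂ)) = 0} := by
  have hM : IsUnit (M : Matrix (Fin 2) (Fin 2) ℂ).det := by simp
  ext w
  rw [Set.mem_ofPred_eq, Set.mem_ofPred_eq,
    exists_trace_eq_zero_and_eq_sub_conj_iff_mem_range_ad hM (by norm_num),
    range_ad_eq_traceForm_orthogonal_ker, ker_ad_nonsing_inv hM,
    ker_ad_eq_span_one_self (SpecialLinearGroup.coe_notMem_range_scalar hM1 hM2),
    mem_traceForm_orthogonal_span_pair, Matrix.one_mul, trace_mul_comm]
end

section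
/- Let G = SL(2,C), and let σ : F_n → G be a representation of a free group, and γ₁, γ₂ ∈ F_n with σ(γ₂) ≠ ±I. Define f : R(F_n, G) × G → G by f(σ', B) = B σ'(γ₁) B⁻¹ σ'(γ₂)⁻¹. If the derivatives of the trace functions σ' ↦ tr σ'(γ₁) and σ' ↦ tr σ'(γ₂) are linearly independent at σ, then f is a submersion at every point (σ, B) with f(σ, B) = I. -/
/-!
At `(σ, B)` the differential of `f` sends a cocycle `z` and `X ∈ sl(2)` to
`(1 - Ad σ(γ₂)) X + Ad B (z γ₁) - z γ₂`. As `σ(γ₂) ≠ ±I`, the map `1 - Ad σ(γ₂)` sends `sl(2)`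
onto the plane `{w | tr (w σ(γ₂)) = 0}` (a computation in coordinates). Since `B` conjugates
`σ(γ₁)` to `σ(γ₂)`, the functional `w ↦ tr (w σ(γ₂))` takes the value
`tr (z γ₁ σ(γ₁)) - tr (z γ₂ σ(γ₂))` on `Ad B (z γ₁) - z γ₂`, and the independence of the two
trace differentials gives a cocycle `z` where this is nonzero. So the image of the differential
contains the plane and a vector off it.
-/

open Matrix
open scoped MatrixGroups

namespace Matrix

variable {K : Type*} [Field K]

theorem exists_traceless_sub_mul_mul_adjugate_eq_fin_two [NeZero (2 : K)] {a b c d x y z : K}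
    (hdet : a * d - b * c = 1) (hwA : (a - d) * x + c * y + b * z = 0)
    (hA : b ≠ 0 ∨ c ≠ 0 ∨ a ≠ d) :
    ∃ X : Matrix (Fin 2) (Fin 2) K,
      X.trace = 0 ∧ X - !![a, b; c, d] * X * !![d, -b; -c, a] = !![x, y; z, -x] := by
  -- `hwA` says `tr (!![x, y; z, -x] * !![a, b; c, d]) = 0`.
  have h2 : (2 : K) ≠ 0 := two_ne_zero
  rcases ne_or_eq c 0 with hc | hc
  · refine ⟨!![(c * x - a * z) / (2 * c), (d * x - b * z) / c;
        0, -((c * x - a * z) / (2 * c))], by simp [trace_fin_two_of], ?_⟩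
    rw [mul_fin_two, mul_fin_two, of_sub_of]
    ext i j; fin_cases i <;> fin_cases j <;> simp <;> field_simp
    · linear_combination (c * x + a * z) * hdet
    · linear_combination (-2 * a * x) * hdet - 2 * hwA
    · linear_combination 2 * z * hdet
    · linear_combination (-(c * x + a * z)) * hdet
  rcases ne_or_eq b 0 with hb | hb
  · refine ⟨!![(b * x + d * y) / (2 * b), 0;
        -((a * x + c * y) / b), -((b * x + d * y) / (2 * b))], by simp [trace_fin_two_of], ?_⟩
    rw [mul_fin_two, mul_fin_two, of_sub_of]
    ext i j; fin_cases i <;> fin_cases j <;> simp <;> field_simp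
    · linear_combination (b * x - d * y) * hdet
    · linear_combination 2 * y * hdet
    · linear_combination 2 * d * x * hdet - 2 * hwA
    · linear_combination (d * y - b * x) * hdet
  subst hb hc
  have had : a - d ≠ 0 := sub_ne_zero.2 (by simpa using hA)
  have hda : d - a ≠ 0 := by rwa [← neg_sub, neg_ne_zero]
  obtain rfl : x = 0 := by simpa [had] using hwA
  refine ⟨!![0, d * y / (d - a); a * z / (a - d), 0], by simp [trace_fin_two_of], ?_⟩
  rw [mul_fin_two, mul_fin_two, of_sub_of]
  ext i j; fin_cases i <;> fin_cases j <;> simp <;> field_simp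
  · linear_combination (-a * y) * hdet
  · linear_combination (-d * z) * hdet

namespace SpecialLinearGroup

theorem fin_two_eq_one_or_eq_neg_one {A : SL(2, K)} (hb : A 0 1 = 0)
    (hc : A 1 0 = 0) (had : A 0 0 = A 1 1) : A = 1 ∨ A = -1 := by
  have hdet := A.det_coe
  rw [det_fin_two, hb, hc, ← had, mul_zero, sub_zero] at hdet
  rcases mul_self_eq_one_iff.1 hdet with ha | ha
  · left; ext i j; fin_cases i <;> fin_cases j <;> simp [hb, hc, ← had, ha]
  · right; ext i j; fin_cases i <;> fin_cases j <;> simp [coe_neg, hb, hc, ← had, ha]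

theorem exists_traceless_sub_conj_eq [NeZero (2 : K)] {A : SL(2, K)}
    (hA1 : A ≠ 1) (hA2 : A ≠ -1) {w : Matrix (Fin 2) (Fin 2) K} (hw : w.trace = 0)
    (hwA : (w * A).trace = 0) :
    ∃ X : Matrix (Fin 2) (Fin 2) K, X.trace = 0 ∧ X - A * X * (A⁻¹ : SL(2, K)) = w := by
  have hdet := A.det_coe
  rw [det_fin_two] at hdet
  have hw11 : w 1 1 = -w 0 0 := by rw [trace_fin_two] at hw; linear_combination hw
  have hscalar : A 0 1 ≠ 0 ∨ A 1 0 ≠ 0 ∨ A 0 0 ≠ A 1 1 := by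
    by_contra! h
    exact (fin_two_eq_one_or_eq_neg_one h.1 h.2.1 h.2.2).elim hA1 hA2
  rw [coe_inv, eta_fin_two (A : Matrix (Fin 2) (Fin 2) K), adjugate_fin_two_of,
    eta_fin_two w, hw11]
  rw [eta_fin_two (A : Matrix (Fin 2) (Fin 2) K), eta_fin_two w, hw11, mul_fin_two,
    trace_fin_two_of] at hwA
  exact exists_traceless_sub_mul_mul_adjugate_eq_fin_two hdet (by linear_combination hwA) hscalar

section

variable {n R : Type*} [Fintype n] [DecidableEq n] [CommRing R]

theorem trace_conj (B : SpecialLinearGroup n R) (M : Matrix n n R) :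
    (B * M * (B⁻¹ : SpecialLinearGroup n R)).trace = M.trace := by
  rw [trace_mul_cycle, ← coe_mul, inv_mul_cancel, coe_one, Matrix.one_mul]

theorem trace_conj_mul_of_conj_eq {A B S : SpecialLinearGroup n R} (hB : B * S * B⁻¹ = A)
    (M : Matrix n n R) :
    (B * M * (B⁻¹ : SpecialLinearGroup n R) * A).trace = (M * S).trace := by
  have hS : ((B⁻¹ * A * B : SpecialLinearGroup n R) : Matrix n n R) = S := by
    rw [← hB]; group
  calc (B * M * (B⁻¹ : SpecialLinearGroup n R) * A).trace
      = (M * (B⁻¹ : SpecialLinearGroup n R) * A * B).trace := by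
        rw [Matrix.mul_assoc, Matrix.mul_assoc, trace_mul_comm]; simp only [Matrix.mul_assoc]
    _ = (M * S).trace := by rw [← hS, coe_mul, coe_mul]; simp only [Matrix.mul_assoc]

end

theorem exists_smul_conj_add_sub_conj_eq [NeZero (2 : K)] {A B S : SL(2, K)} (hA1 : A ≠ 1)
    (hA2 : A ≠ -1) (hB : B * S * B⁻¹ = A) {Z₁ Z₂ : Matrix (Fin 2) (Fin 2) K}
    (hZ₁ : Z₁.trace = 0) (hZ₂ : Z₂.trace = 0) (hZ : (Z₁ * S).trace ≠ (Z₂ * A).trace)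
    {v : Matrix (Fin 2) (Fin 2) K} (hv : v.trace = 0) :
    ∃ (c : K) (X : Matrix (Fin 2) (Fin 2) K), X.trace = 0 ∧
      X + B * (c • Z₁) * (B⁻¹ : SL(2, K)) - A * X * (A⁻¹ : SL(2, K)) - c • Z₂ = v := by
  -- `c` makes `w` below satisfy `tr (w * A) = 0`, so that `w` lies in the image of `1 - Ad A`.
  set c := (v * A).trace / ((Z₁ * S).trace - (Z₂ * A).trace)
  set w := v - (B * (c • Z₁) * (B⁻¹ : SL(2, K)) - c • Z₂)
  have hw : w.trace = 0 := by
    simp only [w, trace_sub, trace_conj, trace_smul, hv, hZ₁, hZ₂, smul_zero, sub_self]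
  have hwA : (w * A).trace = 0 := by
    simp only [w, Matrix.sub_mul, trace_sub, trace_conj_mul_of_conj_eq hB, smul_mul_assoc,
      trace_smul, smul_eq_mul, c]
    field_simp [sub_ne_zero.2 hZ]
    ring
  obtain ⟨X, hX, hXw⟩ := exists_traceless_sub_conj_eq hA1 hA2 hw hwA
  refine ⟨c, X, hX, ?_⟩
  rw [show v = w + (B * (c • Z₁) * (B⁻¹ : SL(2, K)) - c • Z₂) by simp [w], ← hXw]
  abel

end SpecialLinearGroup

end Matrix

section Cocycle

variable {Γ n R : Type*} [Group Γ] [Fintype n] [DecidableEq n] [CommRing R]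

def IsTracelessCocycle (σ : Γ →* SpecialLinearGroup n R) (z : Γ → Matrix n n R) : Prop :=
  (∀ γ, (z γ).trace = 0) ∧
    ∀ δ₁ δ₂, z (δ₁ * δ₂) =
      z δ₁ + (σ δ₁ : Matrix n n R) * z δ₂ * ((σ δ₁)⁻¹ : SpecialLinearGroup n R)

theorem IsTracelessCocycle.smul {σ : Γ →* SpecialLinearGroup n R} {z : Γ → Matrix n n R}
    (hz : IsTracelessCocycle σ z) (c : R) : IsTracelessCocycle σ (c • z) :=
  ⟨fun γ => by rw [Pi.smul_apply, trace_smul, hz.1 γ, smul_zero],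
    fun δ₁ δ₂ => by
      simp only [Pi.smul_apply, hz.2 δ₁ δ₂, smul_add, mul_smul_comm, smul_mul_assoc]⟩

end Cocycle

/-- Let `G = SL(2,ℂ)`, `σ : F_n → G`, `γ₁, γ₂ ∈ F_n` with `σ(γ₂) ≠ ±I`, and
`f(σ', B) = B σ'(γ₁) B⁻¹ σ'(γ₂)⁻¹`. If the derivatives of `σ' ↦ tr σ'(γ₁)` and
`σ' ↦ tr σ'(γ₂)` are linearly independent at `σ` (tangent vectors at `σ` being the
`sl(2,ℂ)`-valued group cocycles `zd`, with `d(tr_γ)(zd) = tr (zd(γ) σ(γ))`), then `f` is a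
submersion at each point `(σ, B)` with `f(σ, B) = I`: its differential
`(zd, Bd) ↦ Bd + Ad(B) zd(γ₁) − Ad(σ(γ₂)) Bd − zd(γ₂)` is onto `sl(2,ℂ)`. -/
theorem hnn_gluing_map_submersion
    (n : ℕ) (σ : FreeGroup (Fin n) →* Matrix.SpecialLinearGroup (Fin 2) ℂ)
    (γ₁ γ₂ : FreeGroup (Fin n))
    (hσ1 : σ γ₂ ≠ 1) (hσ2 : σ γ₂ ≠ -1)
    (hindep : ∀ a b : ℂ,
      (∀ zd : FreeGroup (Fin n) → Matrix (Fin 2) (Fin 2) ℂ,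
        (∀ γ, Matrix.trace (zd γ) = 0) →
        (∀ δ₁ δ₂, zd (δ₁ * δ₂) = zd δ₁ +
          (σ δ₁ : Matrix (Fin 2) (Fin 2) ℂ) * zd δ₂ * ((σ δ₁)⁻¹ : Matrix.SpecialLinearGroup (Fin 2) ℂ)) →
        a * Matrix.trace (zd γ₁ * (σ γ₁ : Matrix (Fin 2) (Fin 2) ℂ)) +
          b * Matrix.trace (zd γ₂ * (σ γ₂ : Matrix (Fin 2) (Fin 2) ℂ)) = 0) →
      a = 0 ∧ b = 0)
    (B : Matrix.SpecialLinearGroup (Fin 2) ℂ)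
    (hB : B * σ γ₁ * B⁻¹ * (σ γ₂)⁻¹ = 1) :
    ∀ v : Matrix (Fin 2) (Fin 2) ℂ, Matrix.trace v = 0 →
      ∃ (zd : FreeGroup (Fin n) → Matrix (Fin 2) (Fin 2) ℂ) (Bd : Matrix (Fin 2) (Fin 2) ℂ),
        (∀ γ, Matrix.trace (zd γ) = 0) ∧
        (∀ δ₁ δ₂, zd (δ₁ * δ₂) = zd δ₁ +
          (σ δ₁ : Matrix (Fin 2) (Fin 2) ℂ) * zd δ₂ * ((σ δ₁)⁻¹ : Matrix.SpecialLinearGroup (Fin 2) ℂ)) ∧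
        Matrix.trace Bd = 0 ∧
        Bd + (B : Matrix (Fin 2) (Fin 2) ℂ) * zd γ₁ * (B⁻¹ : Matrix.SpecialLinearGroup (Fin 2) ℂ)
          - (σ γ₂ : Matrix (Fin 2) (Fin 2) ℂ) * Bd * ((σ γ₂)⁻¹ : Matrix.SpecialLinearGroup (Fin 2) ℂ)
          - zd γ₂ = v := by
  intro v hv
  obtain ⟨z, hz, hdtr⟩ : ∃ z, IsTracelessCocycle σ z ∧
      (z γ₁ * σ γ₁).trace ≠ (z γ₂ * σ γ₂).trace := by
    by_contra! h
    exact one_ne_zero (hindep 1 (-1) fun z htr hcoc => by rw [h z ⟨htr, hcoc⟩]; ring).1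
  obtain ⟨c, Bd, hBd, hdiff⟩ := SpecialLinearGroup.exists_smul_conj_add_sub_conj_eq hσ1 hσ2
    (mul_inv_eq_one.1 hB) (hz.1 γ₁) (hz.1 γ₂) hdtr hv
  obtain ⟨htr, hcoc⟩ := hz.smul c
  exact ⟨c • z, Bd, htr, hcoc, hBd, hdiff⟩
end
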